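/- Let X be a complex Banach space, A : X → X a bounded linear operator, α ∈ (0,2), M > 0, and let the contour parameters satisfy 0 < a_I < a₀ and b_I > 0. Assume that for every real ξ the operator z(ξ)^α·I + A is invertible in the algebra of bounded operators with ‖(z(ξ)^α·I + A)^{-1}‖ ≤ M/(1 + |z(ξ)|^α). Then for every t > 0 and every x ∈ X, both integrands below are Bochner integrable over ℝ and (1/(2πi)) ∫_{−∞}^{∞} e^{z(ξ)t} z'(ξ) z(ξ)^{α−1} (z(ξ)^α·I + A)^{-1} x dξ = x + (1/(2πi)) ∫_{−∞}^{∞} e^{z(ξ)t} z'(ξ) [ z(ξ)^{α−1} (z(ξ)^α·I + A)^{-1} x − z(ξ)^{-1} x ] dξ. -/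

import Mathlib

open MeasureTheory

/-- The hyperbolic contour `z(ξ) = a₀ − a_I cosh ξ + i b_I sinh ξ`. -/
noncomputable def zContour (a₀ aI bI ξ : ℝ) : ℂ :=
  (a₀ : ℂ) - (aI : ℂ) * Complex.cosh (ξ : ℂ) + Complex.I * (bI : ℂ) * Complex.sinh (ξ : ℂ)

/-- Its derivative `z'(ξ) = −a_I sinh ξ + i b_I cosh ξ`. -/
noncomputable def zContour' (aI bI ξ : ℝ) : ℂ :=
  -(aI : ℂ) * Complex.sinh (ξ : ℂ) + Complex.I * (bI : ℂ) * Complex.cosh (ξ : ℂ)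

/-!
The correction term is `x` times `(2πi)⁻¹ ∫ e^{zt} z'/z dξ`, so the identity reduces to this
scalar integral being `2πi`. On the slit plane `e^{wt}/w` has the primitive `log w + F w`, where
`F` is an entire primitive of `(e^{wt} - 1)/w`; hence the integral over `[-R, R]` is the jump of
this primitive between `z(-R)` and `z(R)`. Writing `log w = log (-w) ± πi` on the two halves of the
contour, the jump is `2πi` plus the variation of `log (-w) + F w` along the vertical segments from
`Re z(±R)` to `z(±R)`, which is at most `e^{t Re z} |Im z| / |Re z|` and vanishes as `R → ∞`.
All integrands are dominated by a multiple of `cosh ξ · e^{-a_I t cosh ξ}`, because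
`‖z^{α-1} (z^α + A)⁻¹‖ ≤ M / ‖z‖` and `‖z‖` is bounded away from `0` on the contour.
-/

open Filter Topology Set
open scoped Nat Real

namespace Real

lemma abs_le_cosh (x : ℝ) : |x| ≤ cosh x :=
  calc |x| ≤ sinh |x| := self_le_sinh_iff.2 (abs_nonneg x)
    _ ≤ cosh |x| := (sinh_lt_cosh _).le
    _ = cosh x := cosh_abs x

lemma abs_sinh_le_cosh (x : ℝ) : |sinh x| ≤ cosh x := by
  rw [abs_sinh, ← cosh_abs x]
  exact (sinh_lt_cosh _).le

lemma tendsto_cosh_atTop : Tendsto cosh atTop atTop :=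
  tendsto_atTop_mono (fun x => (le_abs_self x).trans (abs_le_cosh x)) tendsto_id

lemma pow_mul_exp_neg_mul_le {c u : ℝ} (hc : 0 < c) (hu : 0 ≤ u) (n : ℕ) :
    u ^ n * exp (-(c * u)) ≤ n ! / c ^ n := by
  have h := pow_div_factorial_le_exp (x := c * u) (mul_nonneg hc.le hu) n
  rw [exp_neg, ← div_eq_mul_inv, div_le_div_iff₀ (exp_pos _) (by positivity)]
  rw [div_le_iff₀ (by positivity), mul_pow] at h
  linarith

lemma cosh_mul_exp_neg_mul_cosh_le {c : ℝ} (hc : 0 < c) (x : ℝ) :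
    cosh x * exp (-(c * cosh x)) ≤ 12 / c ^ 3 * (1 + x ^ 2)⁻¹ := by
  have hu : 1 ≤ cosh x := one_le_cosh x
  have hsq : 1 + x ^ 2 ≤ 2 * cosh x ^ 2 := by
    nlinarith [sq_abs x, abs_le_cosh x, abs_nonneg x]
  have h3 := pow_mul_exp_neg_mul_le hc (zero_le_one.trans hu) 3
  rw [show ((3 : ℕ)! : ℝ) = 6 by norm_num] at h3
  rw [← div_eq_mul_inv, le_div_iff₀ (by positivity)]
  calc cosh x * exp (-(c * cosh x)) * (1 + x ^ 2)
      ≤ 2 * (cosh x ^ 3 * exp (-(c * cosh x))) := by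
        nlinarith [mul_pos (zero_lt_one.trans_le hu) (exp_pos (-(c * cosh x)))]
    _ ≤ 12 / c ^ 3 := by linarith [show 2 * (6 / c ^ 3) = 12 / c ^ 3 by ring]

end Real

open Real in
lemma integrable_cosh_mul_exp_neg_mul_cosh {c : ℝ} (hc : 0 < c) :
    Integrable fun x : ℝ => cosh x * exp (-(c * cosh x)) := by
  refine (integrable_inv_one_add_sq.const_mul (12 / c ^ 3)).mono' (by fun_prop)
    (ae_of_all _ fun x => ?_)
  rw [Real.norm_of_nonneg (by positivity)]
  exact cosh_mul_exp_neg_mul_cosh_le hc x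

open Real in
lemma tendsto_cosh_mul_exp_neg_mul_cosh {c : ℝ} (hc : 0 < c) :
    Tendsto (fun x : ℝ => cosh x * exp (-(c * cosh x))) atTop (𝓝 0) := by
  have h := (tendsto_inv_atTop_zero.comp (tendsto_atTop_add_const_left _ 1
    (tendsto_pow_atTop two_ne_zero))).const_mul (12 / c ^ 3)
  rw [mul_zero] at h
  exact squeeze_zero (fun x => by positivity) (cosh_mul_exp_neg_mul_cosh_le hc) h

lemma Continuous.aestronglyMeasurable_ringInverse {α R : Type*} [TopologicalSpace α]
    [MeasurableSpace α] [OpensMeasurableSpace α] [SecondCountableTopology α]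
    [NormedRing R] [HasSummableGeomSeries R] {f : α → R} (hf : Continuous f) {μ : Measure α} :
    AEStronglyMeasurable (fun a => Ring.inverse (f a)) μ := by
  have hU : IsOpen (f ⁻¹' {x | IsUnit x}) := Units.isOpen.preimage hf
  have hind : (f ⁻¹' {x | IsUnit x}).indicator (fun a => Ring.inverse (f a))
      = fun a => Ring.inverse (f a) := by
    refine indicator_eq_self.2 fun a ha => ?_
    by_contra hu
    exact ha (Ring.inverse_non_unit _ hu)
  rw [← hind, aestronglyMeasurable_indicator_iff hU.measurableSet]
  refine ContinuousOn.aestronglyMeasurable (fun a ha => ?_) hU.measurableSet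
  have h := NormedRing.inverse_continuousAt (IsUnit.unit ha)
  rw [IsUnit.unit_spec] at h
  exact (h.comp hf.continuousAt).continuousWithinAt

open Complex

lemma exists_hasDerivAt_cexp_mul_sub_one_div (t : ℂ) :
    ∃ F : ℂ → ℂ, ∀ w ≠ 0, HasDerivAt F ((exp (w * t) - 1) / w) w := by
  have hd : Differentiable ℂ (dslope (fun w => exp (w * t)) 0) := by
    rw [← differentiableOn_univ, differentiableOn_dslope univ_mem, differentiableOn_univ]
    fun_prop
  obtain ⟨F, hF⟩ := hd.isExactOn_univ
  refine ⟨F, fun w hw => ?_⟩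
  simpa [dslope_of_ne _ hw, slope_def_field] using hF w trivial

lemma hasDerivAt_add_of_inv_of_cexp_mul_sub_one_div {L F : ℂ → ℂ} {t w : ℂ}
    (hL : HasDerivAt L w⁻¹ w) (hF : HasDerivAt F ((exp (w * t) - 1) / w) w) (hw : w ≠ 0) :
    HasDerivAt (fun u => L u + F u) (exp (w * t) / w) w :=
  (hL.add hF).congr_deriv (by field_simp; ring)

lemma Complex.log_sub_log_neg_of_im_pos {w : ℂ} (hw : 0 < w.im) :
    log w - log (-w) = π * I := by
  apply Complex.ext <;> simp [log_re, log_im, arg_neg_eq_arg_sub_pi_of_im_pos hw]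

lemma norm_sub_ofReal_re_le_of_hasDerivAt {E : Type*} [NormedAddCommGroup E] [NormedSpace ℂ E]
    {f f' : ℂ → E} {C : ℝ} {w : ℂ}
    (hf : ∀ u : ℂ, u.re = w.re → HasDerivAt f (f' u) u)
    (hC : ∀ u : ℂ, u.re = w.re → ‖f' u‖ ≤ C) :
    ‖f w - f w.re‖ ≤ C * |w.im| := by
  have hw : ‖w - w.re‖ = |w.im| := by
    rw [show w - w.re = w.im * I by apply Complex.ext <;> simp, norm_mul, norm_I, mul_one,
      norm_real, Real.norm_eq_abs]
  rw [← hw]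
  exact (convex_hyperplane (.mk add_re smul_re) w.re).norm_image_sub_le_of_norm_hasDerivWithin_le
    (s := {u : ℂ | u.re = w.re}) (fun u hu => (hf u hu).hasDerivWithinAt) hC (ofReal_re w.re) rfl

lemma norm_sub_ofReal_re_le_of_hasDerivAt_cexp_mul_div {Q : ℂ → ℂ} {t : ℝ}
    (hQ : ∀ u : ℂ, u.re < 0 → HasDerivAt Q (exp (u * t) / u) u) {w : ℂ} (hw : w.re < 0) :
    ‖Q w - Q w.re‖ ≤ Real.exp (w.re * t) / |w.re| * |w.im| := by
  refine norm_sub_ofReal_re_le_of_hasDerivAt (fun u hu => hQ u (hu ▸ hw)) fun u hu => ?_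
  rw [norm_div, norm_exp, re_mul_ofReal, hu]
  gcongr
  · exact abs_pos.2 hw.ne
  · simpa [hu] using abs_re_le_norm u

lemma norm_cpow_sub_one_smul_apply_le {X : Type*} [NormedAddCommGroup X] [NormedSpace ℂ X]
    {T : X →L[ℂ] X} {w : ℂ} {α M m : ℝ} (hm : 0 < m) (hwm : m ≤ ‖w‖)
    (hT : ‖T‖ ≤ M / (1 + ‖w‖ ^ α)) (x : X) :
    ‖w ^ ((α : ℂ) - 1) • T x‖ ≤ M / m * ‖x‖ := by
  have hw : 0 < ‖w‖ := hm.trans_le hwm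
  have hden : 0 < 1 + ‖w‖ ^ α := by positivity
  have hM : 0 ≤ M := by
    have := (norm_nonneg T).trans hT
    rwa [div_nonneg_iff, or_iff_left (by intro h; linarith [h.2]), and_iff_left hden.le] at this
  have hpow : ‖w ^ ((α : ℂ) - 1)‖ * (M / (1 + ‖w‖ ^ α)) ≤ M / m := by
    rw [show (α : ℂ) - 1 = ((α - 1 : ℝ) : ℂ) by push_cast; ring, norm_cpow_real,
      Real.rpow_sub_one hw.ne']
    calc ‖w‖ ^ α / ‖w‖ * (M / (1 + ‖w‖ ^ α)) = M / ‖w‖ * (‖w‖ ^ α / (1 + ‖w‖ ^ α)) := by ring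
      _ ≤ M / m * 1 := by
        gcongr
        exact (div_le_one hden).2 (by linarith)
      _ = M / m := mul_one _
  calc ‖w ^ ((α : ℂ) - 1) • T x‖ ≤ ‖w ^ ((α : ℂ) - 1)‖ * (M / (1 + ‖w‖ ^ α) * ‖x‖) := by
        rw [norm_smul]
        gcongr
        exact T.le_of_opNorm_le hT x
    _ ≤ M / m * ‖x‖ := by rw [← mul_assoc]; gcongr

section Contour

variable {a₀ aI bI : ℝ}

lemma zContour_re (a₀ aI bI ξ : ℝ) : (zContour a₀ aI bI ξ).re = a₀ - aI * Real.cosh ξ := by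
  simp [zContour, ← ofReal_cosh, ← ofReal_sinh]

lemma zContour_im (a₀ aI bI ξ : ℝ) : (zContour a₀ aI bI ξ).im = bI * Real.sinh ξ := by
  simp [zContour, ← ofReal_cosh, ← ofReal_sinh]

lemma norm_zContour'_le (aI bI ξ : ℝ) :
    ‖zContour' aI bI ξ‖ ≤ (|aI| + |bI|) * Real.cosh ξ := by
  have hsinh := Real.abs_sinh_le_cosh ξ
  calc ‖zContour' aI bI ξ‖ ≤ |aI| * |Real.sinh ξ| + |bI| * Real.cosh ξ := by
        refine (norm_add_le _ _).trans_eq ?_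
        simp [← ofReal_cosh, ← ofReal_sinh, abs_of_pos (Real.cosh_pos ξ)]
    _ ≤ (|aI| + |bI|) * Real.cosh ξ := by nlinarith [abs_nonneg aI]

lemma hasDerivAt_zContour (a₀ aI bI ξ : ℝ) :
    HasDerivAt (zContour a₀ aI bI) (zContour' aI bI ξ) ξ := by
  have hc := (hasDerivAt_cosh (ξ : ℂ)).comp_ofReal
  have hs := (hasDerivAt_sinh (ξ : ℂ)).comp_ofReal
  refine (((hc.const_mul (aI : ℂ)).const_sub (a₀ : ℂ)).add
    (hs.const_mul (I * bI))).congr_deriv ?_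
  unfold zContour'
  ring

lemma continuous_zContour (a₀ aI bI : ℝ) : Continuous (zContour a₀ aI bI) := by
  unfold zContour
  fun_prop

lemma continuous_zContour' (aI bI : ℝ) : Continuous (zContour' aI bI) := by
  unfold zContour'
  fun_prop

lemma zContour_mem_slitPlane (h2 : aI < a₀) (h3 : bI ≠ 0) (ξ : ℝ) :
    zContour a₀ aI bI ξ ∈ slitPlane := by
  rw [mem_slitPlane_iff, zContour_re, zContour_im]
  rcases eq_or_ne ξ 0 with rfl | hξ
  · left
    simpa using h2
  · right
    exact mul_ne_zero h3 (Real.sinh_ne_zero.2 hξ)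

lemma zContour_ne_zero (h2 : aI < a₀) (h3 : bI ≠ 0) (ξ : ℝ) : zContour a₀ aI bI ξ ≠ 0 :=
  slitPlane_ne_zero (zContour_mem_slitPlane h2 h3 ξ)

lemma continuous_zContour_cpow (h2 : aI < a₀) (h3 : bI ≠ 0) (s : ℂ) :
    Continuous fun ξ => zContour a₀ aI bI ξ ^ s :=
  continuous_iff_continuousAt.2 fun ξ =>
    (continuousAt_cpow_const (zContour_mem_slitPlane h2 h3 ξ)).comp
      (continuous_zContour a₀ aI bI).continuousAt

lemma exists_pos_forall_le_norm_zContour (h1 : 0 < aI) (h2 : aI < a₀) (h3 : bI ≠ 0) :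
    ∃ m > 0, ∀ ξ, m ≤ ‖zContour a₀ aI bI ξ‖ := by
  have hlim : Tendsto (fun ξ => ‖zContour a₀ aI bI ξ‖) (cocompact ℝ) atTop := by
    refine tendsto_atTop_mono (fun ξ => ?_) <| tendsto_atTop_add_const_right _ (-a₀)
      (tendsto_norm_cocompact_atTop.const_mul_atTop h1)
    calc aI * ‖ξ‖ + -a₀ ≤ -(zContour a₀ aI bI ξ).re := by
          rw [zContour_re, Real.norm_eq_abs]
          nlinarith [Real.abs_le_cosh ξ]
      _ ≤ ‖zContour a₀ aI bI ξ‖ := (neg_le_abs _).trans (abs_re_le_norm _)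
  obtain ⟨ξ₀, hξ₀⟩ := (continuous_zContour a₀ aI bI).norm.exists_forall_le hlim
  exact ⟨_, norm_pos_iff.2 (zContour_ne_zero h2 h3 ξ₀), hξ₀⟩

lemma norm_cexp_zContour_mul_zContour'_le (a₀ aI bI t ξ : ℝ) :
    ‖exp (zContour a₀ aI bI ξ * t) * zContour' aI bI ξ‖
      ≤ Real.exp (a₀ * t) * (|aI| + |bI|) *
        (Real.cosh ξ * Real.exp (-(aI * t * Real.cosh ξ))) := by
  have he : ‖exp (zContour a₀ aI bI ξ * t)‖
      = Real.exp (a₀ * t) * Real.exp (-(aI * t * Real.cosh ξ)) := by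
    rw [norm_exp, ← Real.exp_add, re_mul_ofReal, zContour_re]
    ring_nf
  rw [norm_mul, he]
  calc _ ≤ Real.exp (a₀ * t) * Real.exp (-(aI * t * Real.cosh ξ)) *
        ((|aI| + |bI|) * Real.cosh ξ) := by gcongr; exact norm_zContour'_le aI bI ξ
    _ = _ := by ring

lemma integrable_cexp_zContour_mul_zContour' (h1 : 0 < aI) {t : ℝ} (ht : 0 < t) :
    Integrable fun ξ => exp (zContour a₀ aI bI ξ * t) * zContour' aI bI ξ :=
  ((integrable_cosh_mul_exp_neg_mul_cosh (mul_pos h1 ht)).const_mul _).mono'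
    (by have := continuous_zContour a₀ aI bI; have := continuous_zContour' aI bI; fun_prop)
    (ae_of_all _ (norm_cexp_zContour_mul_zContour'_le a₀ aI bI t))

lemma integrable_cexp_zContour_mul_zContour'_mul_inv (h1 : 0 < aI) (h2 : aI < a₀) (h3 : bI ≠ 0)
    {t : ℝ} (ht : 0 < t) :
    Integrable fun ξ =>
      exp (zContour a₀ aI bI ξ * t) * zContour' aI bI ξ * (zContour a₀ aI bI ξ)⁻¹ := by
  obtain ⟨m, hm, hzm⟩ := exists_pos_forall_le_norm_zContour h1 h2 h3
  refine (integrable_cexp_zContour_mul_zContour' h1 ht).mul_bdd (c := m⁻¹)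
    ((continuous_zContour a₀ aI bI).inv₀ (zContour_ne_zero h2 h3)).aestronglyMeasurable
    (ae_of_all _ fun ξ => ?_)
  rw [norm_inv]
  exact inv_anti₀ hm (hzm ξ)

lemma norm_sub_re_zContour_le {Q : ℂ → ℂ} {t : ℝ} (h3 : 0 ≤ bI)
    (hQ : ∀ u : ℂ, u.re < 0 → HasDerivAt Q (exp (u * t) / u) u) {ξ : ℝ}
    (hξ : (zContour a₀ aI bI ξ).re ≤ -1) :
    ‖Q (zContour a₀ aI bI ξ) - Q (zContour a₀ aI bI ξ).re‖
      ≤ bI * Real.exp (a₀ * t) * (Real.cosh ξ * Real.exp (-(aI * t * Real.cosh ξ))) := by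
  set z := zContour a₀ aI bI ξ
  refine (norm_sub_ofReal_re_le_of_hasDerivAt_cexp_mul_div hQ (by linarith)).trans ?_
  have him : |z.im| ≤ bI * Real.cosh ξ := by
    rw [zContour_im, abs_mul, abs_of_nonneg h3]
    gcongr
    exact Real.abs_sinh_le_cosh ξ
  have hre : Real.exp (z.re * t) / |z.re| ≤ Real.exp (z.re * t) :=
    div_le_self (Real.exp_pos _).le (by rw [abs_of_neg (by linarith)]; linarith)
  calc _ ≤ Real.exp (z.re * t) * (bI * Real.cosh ξ) := by gcongr
    _ = _ := by
      rw [zContour_re, show (a₀ - aI * Real.cosh ξ) * t = a₀ * t + -(aI * t * Real.cosh ξ) by ring,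
        Real.exp_add]
      ring

lemma tendsto_primitive_zContour_sub_primitive_zContour_neg (h1 : 0 < aI) (h3 : 0 < bI)
    {t : ℝ} (ht : 0 < t) {F : ℂ → ℂ}
    (hF : ∀ w ≠ 0, HasDerivAt F ((exp (w * t) - 1) / w) w) :
    Tendsto (fun R => (log (zContour a₀ aI bI R) + F (zContour a₀ aI bI R))
      - (log (zContour a₀ aI bI (-R)) + F (zContour a₀ aI bI (-R)))) atTop (𝓝 (2 * π * I)) := by
  set Q : ℂ → ℂ := fun w => log (-w) + F w
  have hQ : ∀ u : ℂ, u.re < 0 → HasDerivAt Q (exp (u * t) / u) u := fun u hu =>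
    have hu0 : u ≠ 0 := fun h => by simp [h] at hu
    hasDerivAt_add_of_inv_of_cexp_mul_sub_one_div
      (((hasDerivAt_log (mem_slitPlane_iff.2 (.inl (by rw [neg_re]; linarith)))).comp u
        (hasDerivAt_neg u)).congr_deriv (by field_simp)) (hF u hu0) hu0
  set z := zContour a₀ aI bI
  set E : ℝ → ℂ := fun ξ => Q (z ξ) - Q (z ξ).re
  have hsplit : ∀ R > 0, (log (z R) + F (z R)) - (log (z (-R)) + F (z (-R)))
      = 2 * π * I + (E R - E (-R)) := by
    intro R hR
    have hsinh := Real.sinh_pos_iff.2 hR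
    have hre : (z (-R)).re = (z R).re := by simp only [z, zContour_re, Real.cosh_neg]
    have hup : log (z R) - log (-z R) = π * I :=
      log_sub_log_neg_of_im_pos (by rw [zContour_im]; positivity)
    have hdown : log (-z (-R)) - log (z (-R)) = π * I := by
      simpa using log_sub_log_neg_of_im_pos (w := -z (-R))
        (by rw [neg_im, zContour_im, Real.sinh_neg]; nlinarith)
    simp only [E, Q, hre]
    linear_combination hup + hdown
  set B : ℝ → ℝ := fun R =>
    bI * Real.exp (a₀ * t) * (Real.cosh R * Real.exp (-(aI * t * Real.cosh R)))
  have hB : Tendsto B atTop (𝓝 0) := by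
    simpa using (tendsto_cosh_mul_exp_neg_mul_cosh (mul_pos h1 ht)).const_mul
      (bI * Real.exp (a₀ * t))
  have hfar : ∀ᶠ R in atTop, (z R).re ≤ -1 ∧ (z (-R)).re ≤ -1 := by
    filter_upwards [(Real.tendsto_cosh_atTop.const_mul_atTop h1).eventually_ge_atTop (a₀ + 1)]
      with R hR
    simp only [z, zContour_re, Real.cosh_neg]
    constructor <;> linarith
  have hE : Tendsto E atTop (𝓝 0) :=
    squeeze_zero_norm' (hfar.mono fun R hR => norm_sub_re_zContour_le h3.le hQ hR.1) hB
  have hE' : Tendsto (fun R => E (-R)) atTop (𝓝 0) :=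
    squeeze_zero_norm' (hfar.mono fun R hR => by
      simpa only [Real.cosh_neg] using norm_sub_re_zContour_le h3.le hQ hR.2) hB
  refine Tendsto.congr' ((eventually_gt_atTop 0).mono fun R hR => (hsplit R hR).symm) ?_
  simpa using (hE.sub hE').const_add (2 * π * I)

theorem integral_cexp_zContour_mul_zContour'_mul_inv (h1 : 0 < aI) (h2 : aI < a₀) (h3 : 0 < bI)
    {t : ℝ} (ht : 0 < t) :
    ∫ ξ, exp (zContour a₀ aI bI ξ * t) * zContour' aI bI ξ * (zContour a₀ aI bI ξ)⁻¹
      = 2 * π * I := by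
  obtain ⟨F, hF⟩ := exists_hasDerivAt_cexp_mul_sub_one_div (t : ℂ)
  have hint := integrable_cexp_zContour_mul_zContour'_mul_inv h1 h2 h3.ne' ht
  have hFTC : ∀ R, ∫ ξ in (-R)..R,
      exp (zContour a₀ aI bI ξ * t) * zContour' aI bI ξ * (zContour a₀ aI bI ξ)⁻¹
        = (log (zContour a₀ aI bI R) + F (zContour a₀ aI bI R))
          - (log (zContour a₀ aI bI (-R)) + F (zContour a₀ aI bI (-R))) := fun R =>
    intervalIntegral.integral_eq_sub_of_hasDerivAt (fun ξ _ =>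
      ((hasDerivAt_add_of_inv_of_cexp_mul_sub_one_div
        (hasDerivAt_log (zContour_mem_slitPlane h2 h3.ne' ξ))
        (hF _ (zContour_ne_zero h2 h3.ne' ξ)) (zContour_ne_zero h2 h3.ne' ξ)).comp ξ
          (hasDerivAt_zContour a₀ aI bI ξ)).congr_deriv (by ring))
      hint.intervalIntegrable
  exact tendsto_nhds_unique ((intervalIntegral_tendsto_integral hint tendsto_neg_atTop_atBot
    tendsto_id).congr hFTC) (tendsto_primitive_zContour_sub_primitive_zContour_neg h1 h3 ht hF)

end Contour

theorem corrected_propagator_representation_general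
    {X : Type*} [NormedAddCommGroup X] [NormedSpace ℂ X] [CompleteSpace X]
    (A : X →L[ℂ] X) (α : ℝ) (M : ℝ)
    (a₀ aI bI : ℝ) (h1 : 0 < aI) (h2 : aI < a₀) (h3 : 0 < bI)
    (hbound : ∀ ξ : ℝ,
      ‖Ring.inverse ((zContour a₀ aI bI ξ ^ (α : ℂ)) • (1 : X →L[ℂ] X) + A)‖
        ≤ M / (1 + ‖zContour a₀ aI bI ξ‖ ^ α))
    (t : ℝ) (ht : 0 < t) (x : X) :
    Integrable (fun ξ : ℝ =>
      (Complex.exp (zContour a₀ aI bI ξ * (t : ℂ)) * zContour' aI bI ξ *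
          zContour a₀ aI bI ξ ^ ((α : ℂ) - 1)) •
        (Ring.inverse ((zContour a₀ aI bI ξ ^ (α : ℂ)) • (1 : X →L[ℂ] X) + A)) x) ∧
    Integrable (fun ξ : ℝ =>
      (Complex.exp (zContour a₀ aI bI ξ * (t : ℂ)) * zContour' aI bI ξ) •
        ((zContour a₀ aI bI ξ ^ ((α : ℂ) - 1)) •
            (Ring.inverse ((zContour a₀ aI bI ξ ^ (α : ℂ)) • (1 : X →L[ℂ] X) + A)) x
          - (zContour a₀ aI bI ξ)⁻¹ • x)) ∧
    (1 / (2 * (Real.pi : ℂ) * Complex.I)) •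
        (∫ ξ : ℝ, (Complex.exp (zContour a₀ aI bI ξ * (t : ℂ)) * zContour' aI bI ξ *
            zContour a₀ aI bI ξ ^ ((α : ℂ) - 1)) •
          (Ring.inverse ((zContour a₀ aI bI ξ ^ (α : ℂ)) • (1 : X →L[ℂ] X) + A)) x)
      = x + (1 / (2 * (Real.pi : ℂ) * Complex.I)) •
        (∫ ξ : ℝ, (Complex.exp (zContour a₀ aI bI ξ * (t : ℂ)) * zContour' aI bI ξ) •
          ((zContour a₀ aI bI ξ ^ ((α : ℂ) - 1)) •
              (Ring.inverse ((zContour a₀ aI bI ξ ^ (α : ℂ)) • (1 : X →L[ℂ] X) + A)) x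
            - (zContour a₀ aI bI ξ)⁻¹ • x)) := by
  obtain ⟨m, hm, hzm⟩ := exists_pos_forall_le_norm_zContour h1 h2 h3.ne'
  have hcpow := continuous_zContour_cpow h2 h3.ne'
  have hresolvent : AEStronglyMeasurable fun ξ => zContour a₀ aI bI ξ ^ ((α : ℂ) - 1) •
      (Ring.inverse (zContour a₀ aI bI ξ ^ (α : ℂ) • (1 : X →L[ℂ] X) + A)) x :=
    (hcpow _).aestronglyMeasurable.smul <|
      (ContinuousLinearMap.apply ℂ X x).continuous.comp_aestronglyMeasurable
        (((hcpow _).smul continuous_const).add continuous_const).aestronglyMeasurable_ringInverse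
  have hI₁ := (integrable_cexp_zContour_mul_zContour' (a₀ := a₀) (bI := bI) h1 ht).smul_bdd _
    hresolvent (ae_of_all _ fun ξ => norm_cpow_sub_one_smul_apply_le hm (hzm ξ) (hbound ξ) x)
  have hI₂ := (integrable_cexp_zContour_mul_zContour'_mul_inv h1 h2 h3.ne' ht).smul_const x
  simp only [Pi.smul_def', smul_smul] at hI₁
  simp only [smul_sub, smul_smul]
  refine ⟨hI₁, hI₁.sub hI₂, ?_⟩
  rw [integral_sub hI₁ hI₂, integral_smul_const,
    integral_cexp_zContour_mul_zContour'_mul_inv h1 h2 h3 ht, smul_sub, smul_smul,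
    one_div_mul_cancel (by simp [Real.pi_ne_zero]), one_smul]
  abel

/-- On [the parametrized hyperbolic contour with `0 < a_I < a₀`, `b_I > 0`,
and a sectorial resolvent bound, the naive and the corrected representations of the
fractional propagator `S_α(t)x` coincide for `t > 0`:
`(1/(2πi)) ∫ e^{z t} z' z^{α−1} (z^α I + A)⁻¹ x dξ
  = x + (1/(2πi)) ∫ e^{z t} z' [z^{α−1} (z^α I + A)⁻¹ x − z⁻¹ x] dξ`,
both integrands being Bochner integrable. -/
theorem corrected_propagator_representation
    {X : Type*} [NormedAddCommGroup X] [NormedSpace ℂ X] [CompleteSpace X]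
    (A : X →L[ℂ] X) (α : ℝ) (hα : α ∈ Set.Ioo (0 : ℝ) 2) (M : ℝ) (hM : 0 < M)
    (a₀ aI bI : ℝ) (h1 : 0 < aI) (h2 : aI < a₀) (h3 : 0 < bI)
    (hinv : ∀ ξ : ℝ,
      IsUnit ((zContour a₀ aI bI ξ ^ (α : ℂ)) • (1 : X →L[ℂ] X) + A))
    (hbound : ∀ ξ : ℝ,
      ‖Ring.inverse ((zContour a₀ aI bI ξ ^ (α : ℂ)) • (1 : X →L[ℂ] X) + A)‖
        ≤ M / (1 + ‖zContour a₀ aI bI ξ‖ ^ α))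
    (t : ℝ) (ht : 0 < t) (x : X) :
    Integrable (fun ξ : ℝ =>
      (Complex.exp (zContour a₀ aI bI ξ * (t : ℂ)) * zContour' aI bI ξ *
          zContour a₀ aI bI ξ ^ ((α : ℂ) - 1)) •
        (Ring.inverse ((zContour a₀ aI bI ξ ^ (α : ℂ)) • (1 : X →L[ℂ] X) + A)) x) ∧
    Integrable (fun ξ : ℝ =>
      (Complex.exp (zContour a₀ aI bI ξ * (t : ℂ)) * zContour' aI bI ξ) •
        ((zContour a₀ aI bI ξ ^ ((α : ℂ) - 1)) •
            (Ring.inverse ((zContour a₀ aI bI ξ ^ (α : ℂ)) • (1 : X →L[ℂ] X) + A)) x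
          - (zContour a₀ aI bI ξ)⁻¹ • x)) ∧
    (1 / (2 * (Real.pi : ℂ) * Complex.I)) •
        (∫ ξ : ℝ, (Complex.exp (zContour a₀ aI bI ξ * (t : ℂ)) * zContour' aI bI ξ *
            zContour a₀ aI bI ξ ^ ((α : ℂ) - 1)) •
          (Ring.inverse ((zContour a₀ aI bI ξ ^ (α : ℂ)) • (1 : X →L[ℂ] X) + A)) x)
      = x + (1 / (2 * (Real.pi : ℂ) * Complex.I)) •
        (∫ ξ : ℝ, (Complex.exp (zContour a₀ aI bI ξ * (t : ℂ)) * zContour' aI bI ξ) •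
          ((zContour a₀ aI bI ξ ^ ((α : ℂ) - 1)) •
              (Ring.inverse ((zContour a₀ aI bI ξ ^ (α : ℂ)) • (1 : X →L[ℂ] X) + A)) x
            - (zContour a₀ aI bI ξ)⁻¹ • x)) :=
  corrected_propagator_representation_general A α M a₀ aI bI h1 h2 h3 hbound t ht x
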